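/- Let G be a finite cyclic group of prime order q with generator g, H : Fin m → G, and U a finite set of clients with seeds s_i ∈ ZMod q and input vectors x_i ∈ (ZMod q)^m. Let r_i ∈ G^m be given by (r_i)_j = H(j)^{s_i}, let y_i ∈ G^m be given by (y_i)_j = g^{(x_i)_j} · (r_i)_j, and let s_R = Σ_{i ∈ U} s_i and R_j = H(j)^{s_R}. Then for every coordinate j: (Π_{i ∈ U} (y_i)_j) / R_j = g^{Σ_{i ∈ U} (x_i)_j}. -/

import Mathlib

/-!
Unmasking works because `t ↦ h ^ t.val` is a homomorphism from `ZMod q` into any group in which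
`h ^ q = 1`: the product of the masks `H j ^ sᵢ` is `H j ^ (∑ sᵢ)`, which cancels against `R j`,
and the product of the `g ^ xᵢ` is `g ^ (∑ xᵢ)`.
-/

open Finset

theorem pow_eq_pow_of_natCast_eq {M : Type*} [LeftCancelMonoid M] {q : ℕ} {a : M}
    (ha : orderOf a ∣ q) {n n' : ℕ} (h : (n : ZMod q) = n') : a ^ n = a ^ n' :=
  pow_eq_pow_iff_modEq.mpr (((ZMod.natCast_eq_natCast_iff _ _ _).mp h).of_dvd ha)

theorem pow_val_sum {M ι : Type*} [CancelCommMonoid M] {q : ℕ} [NeZero q] {a : M}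
    (ha : orderOf a ∣ q) (U : Finset ι) (f : ι → ZMod q) :
    a ^ (∑ i ∈ U, f i).val = ∏ i ∈ U, a ^ (f i).val := by
  rw [prod_pow_eq_pow_sum]
  exact pow_eq_pow_of_natCast_eq ha (by push_cast [ZMod.natCast_val, ZMod.cast_id', id]; rfl)

theorem stmt7_general {G ι : Type*} [CommGroup G] [Fintype G] (q m : ℕ)
    (hcard : Fintype.card G = q) (g : G)
    (H : Fin m → G) (U : Finset ι) (s : ι → ZMod q) (x : ι → Fin m → ZMod q)
    (r y : ι → Fin m → G)
    (hr : ∀ i j, r i j = H j ^ (s i).val)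
    (hy : ∀ i j, y i j = g ^ (x i j).val * r i j)
    (sR : ZMod q) (hsR : sR = ∑ i ∈ U, s i)
    (R : Fin m → G) (hR : ∀ j, R j = H j ^ sR.val) :
    ∀ j, (∏ i ∈ U, y i j) / R j = g ^ (∑ i ∈ U, x i j).val := by
  intro j
  have : NeZero q := ⟨hcard ▸ Fintype.card_ne_zero⟩
  have horder (a : G) : orderOf a ∣ q := hcard ▸ orderOf_dvd_card
  rw [hR, hsR, pow_val_sum (horder _), pow_val_sum (horder _)]
  simp only [hy, hr, prod_mul_distrib, mul_div_cancel_right]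

theorem stmt7 {G ι : Type*} [CommGroup G] [Fintype G] (q m : ℕ) (hq : q.Prime)
    (hcard : Fintype.card G = q) (g : G) (hg : ∀ a : G, a ∈ Subgroup.zpowers g)
    (H : Fin m → G) (U : Finset ι) (s : ι → ZMod q) (x : ι → Fin m → ZMod q)
    (r y : ι → Fin m → G)
    (hr : ∀ i j, r i j = H j ^ (s i).val)
    (hy : ∀ i j, y i j = g ^ (x i j).val * r i j)
    (sR : ZMod q) (hsR : sR = ∑ i ∈ U, s i)
    (R : Fin m → G) (hR : ∀ j, R j = H j ^ sR.val) :
    ∀ j, (∏ i ∈ U, y i j) / R j = g ^ (∑ i ∈ U, x i j).val :=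
  stmt7_general q m hcard g H U s x r y hr hy sR hsR R hR
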